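/- Let X = (⋃_{n≥1} {(1/n, y) : y ∈ [−1,1]}) ∪ {(0,y) : y ∈ [−1,0)} ∪ (⋃_{k≥1} I_k) ⊆ ℝ², where I_k = {(0,y) : y ∈ (1/(k+1), 1/k)}. Then the space Q(X) of quasicomponents of X (with the quotient topology) is compact, but the space Σ(X) of connected components of X is not compact. -/

import Mathlib

open Set

/-- Two points are related iff they lie in exactly the same clopen sets,
i.e. they are in the same quasicomponent. -/
def quasiComponentSetoid (T : Type*) [TopologicalSpace T] : Setoid T where
  r a b := ∀ U : Set T, IsClopen U → (a ∈ U ↔ b ∈ U)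
  iseqv := ⟨fun _ _ _ => Iff.rfl, fun h U hU => (h U hU).symm,
    fun h h' U hU => (h U hU).trans (h' U hU)⟩

/-- The space of quasicomponents, with the quotient topology. -/
def QuasiComponents (T : Type*) [TopologicalSpace T] : Type _ :=
  Quotient (quasiComponentSetoid T)

instance (T : Type*) [TopologicalSpace T] : TopologicalSpace (QuasiComponents T) :=
  instTopologicalSpaceQuotient

/-- The example space: vertical segments at `x = 1/n`, the segment
`{0} × [-1,0)`, and the open intervals `I_k = {0} × (1/(k+1), 1/k)`. -/
def X18 : Set (ℝ × ℝ) :=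
  {p | (∃ n : ℕ, p.1 = 1 / (n + 1) ∧ p.2 ∈ Set.Icc (-1 : ℝ) 1) ∨
       (p.1 = 0 ∧ p.2 ∈ Set.Ico (-1 : ℝ) 0) ∨
       (∃ k : ℕ, p.1 = 0 ∧ p.2 ∈ Set.Ioo (1 / ((k : ℝ) + 2)) (1 / ((k : ℝ) + 1)))}


-- reciprocal facts
lemma recip_pos (n : ℕ) : (0:ℝ) < 1/((n:ℝ)+1) := by positivity

lemma recip_lt (n : ℕ) : (1:ℝ)/((n:ℝ)+2) < 1/((n:ℝ)+1) := by
  apply one_div_lt_one_div_of_lt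
  · positivity
  · norm_num

lemma recip_le_iff {n m : ℕ} : (1:ℝ)/((n:ℝ)+1) ≤ 1/((m:ℝ)+1) ↔ m ≤ n := by
  rw [div_le_div_iff₀ (by positivity) (by positivity)]
  constructor
  · intro h
    have : (m:ℝ) ≤ n := by linarith
    exact_mod_cast this
  · intro h
    have : (m:ℝ) ≤ n := by exact_mod_cast h
    linarith

lemma recip_gap {n m : ℕ} (h1 : (1:ℝ)/((n:ℝ)+2) < 1/((m:ℝ)+1)) (h2 : (1:ℝ)/((m:ℝ)+1) < 1/((n:ℝ)+1)) : False := by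
  have hnm : n < m := by
    by_contra h
    push_neg at h
    have := recip_le_iff.mpr h
    linarith
  have : m ≥ n + 1 := hnm
  have : (1:ℝ)/((m:ℝ)+1) ≤ 1/((n:ℝ)+1+1) := by
    have := recip_le_iff (n := m) (m := n+1)
    push_cast at this ⊢
    have h := this.mpr hnm
    linarith [h]
  have e : (n:ℝ)+1+1 = (n:ℝ)+2 := by ring
  rw [e] at this
  linarith

-- membership in X18 unfolded
lemma mem_X18_iff {p : ℝ × ℝ} : p ∈ X18 ↔
    (∃ n : ℕ, p.1 = 1 / ((n:ℝ) + 1) ∧ p.2 ∈ Set.Icc (-1 : ℝ) 1) ∨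
    (p.1 = 0 ∧ p.2 ∈ Set.Ico (-1 : ℝ) 0) ∨
    (∃ k : ℕ, p.1 = 0 ∧ p.2 ∈ Set.Ioo (1 / ((k : ℝ) + 2)) (1 / ((k : ℝ) + 1))) :=
  Iff.rfl

-- second-coordinate set for x = 0 points
def SP (y : ℝ) : Prop :=
  y ∈ Set.Ico (-1 : ℝ) 0 ∨ ∃ k : ℕ, y ∈ Set.Ioo (1 / ((k : ℝ) + 2)) (1 / ((k : ℝ) + 1))

lemma not_SP_zero : ¬ SP 0 := by
  rintro (⟨_, h⟩ | ⟨k, h1, h2⟩)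
  · linarith
  · have := recip_pos (k+1)
    push_cast at this
    have e : (k:ℝ)+1+1 = (k:ℝ)+2 := by ring
    rw [e] at this
    linarith

lemma not_SP_recip (m : ℕ) : ¬ SP (1/((m:ℝ)+1)) := by
  rintro (⟨_, h⟩ | ⟨k, h1, h2⟩)
  · have := recip_pos m; linarith
  · exact recip_gap h1 h2

lemma not_SP_recip2 (m : ℕ) : ¬ SP (1/((m:ℝ)+2)) := by
  have e : (1:ℝ)/((m:ℝ)+2) = 1/(((m+1:ℕ):ℝ)+1) := by push_cast; ring_nf
  rw [e]; exact not_SP_recip (m+1)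

-- every point of X18 with first coordinate 0 has SP second coordinate
lemma SP_of_mem {p : ℝ × ℝ} (hp : p ∈ X18) (h0 : p.1 = 0) : SP p.2 := by
  rcases hp with ⟨n, hn, _⟩ | ⟨_, h⟩ | ⟨k, _, h⟩
  · exfalso; rw [h0] at hn; have := recip_pos n; rw [← hn] at this; exact lt_irrefl _ this
  · exact Or.inl h
  · exact Or.inr ⟨k, h⟩

-- first coordinates of X18 points
lemma fst_mem {p : ℝ × ℝ} (hp : p ∈ X18) : p.1 = 0 ∨ ∃ n : ℕ, p.1 = 1/((n:ℝ)+1) := by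
  rcases hp with ⟨n, hn, _⟩ | ⟨h, _⟩ | ⟨k, h, _⟩
  · exact Or.inr ⟨n, hn⟩
  · exact Or.inl h
  · exact Or.inl h

lemma fst_nonneg {p : ℝ × ℝ} (hp : p ∈ X18) : 0 ≤ p.1 := by
  rcases fst_mem hp with h | ⟨n, h⟩
  · rw [h]
  · rw [h]; exact (recip_pos n).le

-- a preconnected subset of X18 has constant first coordinate
lemma fst_const {C : Set ↥X18} (hC : IsPreconnected C) {a b : ↥X18}
    (ha : a ∈ C) (hb : b ∈ C) : (a:ℝ×ℝ).1 = (b:ℝ×ℝ).1 := by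
  set f : ↥X18 → ℝ := fun p => (p:ℝ×ℝ).1 with hf
  have hfc : Continuous f := continuous_fst.comp continuous_subtype_val
  have hD : IsPreconnected (f '' C) := hC.image f hfc.continuousOn
  by_contra hne
  -- wlog: get u < v both in image
  have key : ∀ u v : ↥X18, u ∈ C → v ∈ C → f u < f v → False := by
    intro u v hu hv hlt
    have huX := u.2
    have hvX := v.2
    have hfu : f u = (u:ℝ×ℝ).1 := rfl
    have hfv : f v = (v:ℝ×ℝ).1 := rfl
    rw [hfu, hfv] at hlt
    have hu0 : 0 ≤ (u:ℝ×ℝ).1 := fst_nonneg huX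
    rcases fst_mem hvX with h | ⟨n, h⟩
    · rw [h] at hlt; exact absurd hlt (not_lt.mpr hu0)
    · have hule : (u:ℝ×ℝ).1 ≤ 1/((n:ℝ)+2) := by
        rcases fst_mem huX with h' | ⟨m, h'⟩
        · rw [h']; exact ((recip_pos (n+1)).le.trans (by push_cast; rw [show ((n:ℝ)+1)+1 = (n:ℝ)+2 by ring]))
        · rw [h'] at hlt ⊢
          rw [h] at hlt
          have hmn : n < m := by
            by_contra hc
            push_neg at hc
            exact absurd (recip_le_iff.mpr hc) (not_le.mpr hlt)
          have : (1:ℝ)/((m:ℝ)+1) ≤ 1/(((n+1:ℕ):ℝ)+1) := recip_le_iff.mpr hmn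
          push_cast at this
          rw [show (n:ℝ)+1+1 = (n:ℝ)+2 from by ring] at this
          linarith
      set t : ℝ := (1/((n:ℝ)+2) + 1/((n:ℝ)+1))/2 with ht
      have ht1 : 1/((n:ℝ)+2) < t := by have := recip_lt n; rw [ht]; linarith
      have ht2 : t < 1/((n:ℝ)+1) := by have := recip_lt n; rw [ht]; linarith
      have htmem : t ∈ f '' C := by
        have : t ∈ Icc (f u) (f v) := ⟨by rw [hfu]; linarith, by rw [hfv, h]; linarith⟩
        exact hD.ordConnected.out ⟨u, hu, rfl⟩ ⟨v, hv, rfl⟩ this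
      obtain ⟨w, hw, hwt⟩ := htmem
      have hwt' : (w:ℝ×ℝ).1 = t := hwt
      rcases fst_mem w.2 with h' | ⟨m, h'⟩
      · rw [h'] at hwt'
        have : (0:ℝ) < t := lt_trans (by positivity) ht1
        rw [← hwt'] at this; exact lt_irrefl _ this
      · rw [h'] at hwt'
        rw [← hwt'] at ht1 ht2
        exact recip_gap ht1 ht2
  have hfa : f a = (a:ℝ×ℝ).1 := rfl
  have hfb : f b = (b:ℝ×ℝ).1 := rfl
  rcases lt_trichotomy ((a:ℝ×ℝ).1) ((b:ℝ×ℝ).1) with h | h | h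
  · exact key a b ha hb (by rw [hfa, hfb]; exact h)
  · exact hne h
  · exact key b a hb ha (by rw [hfa, hfb]; exact h)

-- within a preconnected set of x=0 points, second coordinates stay in one piece
lemma snd_piece {C : Set ↥X18} (hC : IsPreconnected C)
    (h0 : ∀ p ∈ C, (p:ℝ×ℝ).1 = 0) {a b : ↥X18} (ha : a ∈ C) (hb : b ∈ C) :
    ((a:ℝ×ℝ).2 < 0 → (b:ℝ×ℝ).2 < 0) ∧
    (∀ k : ℕ, (a:ℝ×ℝ).2 ∈ Ioo (1/((k:ℝ)+2)) (1/((k:ℝ)+1)) →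
      (b:ℝ×ℝ).2 ∈ Ioo (1/((k:ℝ)+2)) (1/((k:ℝ)+1))) := by
  set g : ↥X18 → ℝ := fun p => (p:ℝ×ℝ).2 with hg
  have hgc : Continuous g := continuous_snd.comp continuous_subtype_val
  have hE : IsPreconnected (g '' C) := hC.image g hgc.continuousOn
  have hoc := hE.ordConnected
  have hSP : ∀ y ∈ g '' C, SP y := by
    rintro y ⟨p, hp, rfl⟩
    exact SP_of_mem p.2 (h0 p hp)
  have hag : (a:ℝ×ℝ).2 ∈ g '' C := ⟨a, ha, rfl⟩
  have hbg : (b:ℝ×ℝ).2 ∈ g '' C := ⟨b, hb, rfl⟩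
  constructor
  · intro hneg
    by_contra hc
    push_neg at hc
    have h0mem : (0:ℝ) ∈ g '' C :=
      hoc.out hag hbg ⟨hneg.le, hc⟩
    exact not_SP_zero (hSP 0 h0mem)
  · rintro k ⟨h1, h2⟩
    have hbSP := hSP _ hbg
    constructor
    · by_contra hc
      push_neg at hc
      have : (1/((k:ℝ)+2)) ∈ g '' C := hoc.out hbg hag ⟨hc, h1.le⟩
      exact not_SP_recip2 k (hSP _ this)
    · by_contra hc
      push_neg at hc
      have : (1/((k:ℝ)+1)) ∈ g '' C := hoc.out hag hbg ⟨h2.le, hc⟩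
      exact not_SP_recip k (hSP _ this)

-- component of a point on line n stays on line n
lemma comp_line {n : ℕ} {a : ↥X18} (ha : (a:ℝ×ℝ).1 = 1/((n:ℝ)+1)) :
    ∀ b ∈ connectedComponent a, (b:ℝ×ℝ).1 = 1/((n:ℝ)+1) := by
  intro b hb
  have := fst_const isPreconnected_connectedComponent
    (mem_connectedComponent (x := a)) hb
  rw [← this, ha]

lemma comp_zero {a : ↥X18} (ha : (a:ℝ×ℝ).1 = 0) :
    ∀ b ∈ connectedComponent a, (b:ℝ×ℝ).1 = 0 := by
  intro b hb
  have := fst_const isPreconnected_connectedComponent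
    (mem_connectedComponent (x := a)) hb
  rw [← this, ha]

lemma comp_Ik {k : ℕ} {a : ↥X18} (ha1 : (a:ℝ×ℝ).1 = 0)
    (ha2 : (a:ℝ×ℝ).2 ∈ Ioo (1/((k:ℝ)+2)) (1/((k:ℝ)+1))) :
    ∀ b ∈ connectedComponent a,
      (b:ℝ×ℝ).1 = 0 ∧ (b:ℝ×ℝ).2 ∈ Ioo (1/((k:ℝ)+2)) (1/((k:ℝ)+1)) := by
  intro b hb
  have h0 := comp_zero ha1
  refine ⟨h0 b hb, ?_⟩
  exact (snd_piece isPreconnected_connectedComponent h0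
    (mem_connectedComponent (x := a)) hb).2 k ha2

lemma comp_neg {a : ↥X18} (ha1 : (a:ℝ×ℝ).1 = 0) (ha2 : (a:ℝ×ℝ).2 < 0) :
    ∀ b ∈ connectedComponent a, (b:ℝ×ℝ).1 = 0 ∧ (b:ℝ×ℝ).2 < 0 := by
  intro b hb
  have h0 := comp_zero ha1
  exact ⟨h0 b hb, (snd_piece isPreconnected_connectedComponent h0
    (mem_connectedComponent (x := a)) hb).1 ha2⟩

-- lines are preconnected
lemma line_mem (n : ℕ) {y : ℝ} (hy : y ∈ Icc (-1:ℝ) 1) :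
    ((1/((n:ℝ)+1), y) : ℝ × ℝ) ∈ X18 :=
  Or.inl ⟨n, rfl, hy⟩

noncomputable def lineMap (n : ℕ) : ℝ → ↥X18 := fun y =>
  ⟨(1/((n:ℝ)+1), max (-1) (min 1 y)), line_mem n ⟨le_max_left _ _,
    max_le (by norm_num) (min_le_left _ _)⟩⟩

lemma lineMap_cont (n : ℕ) : Continuous (lineMap n) := by
  apply Continuous.subtype_mk
  exact continuous_const.prodMk (continuous_const.max (continuous_const.min continuous_id))

lemma line_eq_image (n : ℕ) :
    {p : ↥X18 | (p:ℝ×ℝ).1 = 1/((n:ℝ)+1)} = lineMap n '' (Icc (-1) 1) := by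
  ext p
  constructor
  · intro hp
    have hpX := p.2
    have hy : (p:ℝ×ℝ).2 ∈ Icc (-1:ℝ) 1 := by
      rcases hpX with ⟨m, hm, hy⟩ | ⟨h, _⟩ | ⟨k, h, _⟩
      · exact hy
      · exfalso; rw [hp] at h; exact absurd h (ne_of_gt (recip_pos n))
      · exfalso; rw [hp] at h; exact absurd h (ne_of_gt (recip_pos n))
    refine ⟨(p:ℝ×ℝ).2, hy, ?_⟩
    apply Subtype.ext
    have : max (-1) (min 1 (p:ℝ×ℝ).2) = (p:ℝ×ℝ).2 := by
      rw [min_eq_right hy.2, max_eq_right hy.1]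
    simp only [lineMap, this]
    exact Prod.ext hp.symm rfl
  · rintro ⟨y, hy, rfl⟩
    exact rfl

lemma line_preconn (n : ℕ) : IsPreconnected {p : ↥X18 | (p:ℝ×ℝ).1 = 1/((n:ℝ)+1)} := by
  rw [line_eq_image]
  exact isPreconnected_Icc.image _ (lineMap_cont n).continuousOn

-- two points on the same line are in the same quasicomponent
lemma quasi_line {n : ℕ} {a b : ↥X18} (ha : (a:ℝ×ℝ).1 = 1/((n:ℝ)+1))
    (hb : (b:ℝ×ℝ).1 = 1/((n:ℝ)+1)) :
    ∀ U : Set ↥X18, IsClopen U → (a ∈ U ↔ b ∈ U) := by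
  intro U hU
  constructor
  · intro haU
    exact (line_preconn n).subset_isClopen hU ⟨a, ha, haU⟩ hb
  · intro hbU
    exact (line_preconn n).subset_isClopen hU ⟨b, hb, hbU⟩ ha

-- second coordinate of an x=0 point lies in [-1,1]
lemma snd_mem_Icc {a : ↥X18} (ha : (a:ℝ×ℝ).1 = 0) : (a:ℝ×ℝ).2 ∈ Icc (-1:ℝ) 1 := by
  rcases SP_of_mem a.2 ha with ⟨h1, h2⟩ | ⟨k, h1, h2⟩
  · exact ⟨h1, by linarith⟩
  · have hk2 : (0:ℝ) < 1/((k:ℝ)+2) := by positivity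
    have hk1 : (1:ℝ)/((k:ℝ)+1) ≤ 1 := by
      rw [div_le_one (by positivity)]; push_cast; linarith [Nat.cast_nonneg (α := ℝ) k]
    exact ⟨by linarith, by linarith⟩

-- near any x=0 point, each far-enough line has a point in any given ball
lemma ball_point (a : ↥X18) (ha : (a:ℝ×ℝ).1 = 0) {ε : ℝ} (hε : 0 < ε) :
    ∃ N : ℕ, ∀ n ≥ N, ∃ w : ↥X18, (w:ℝ×ℝ).1 = 1/((n:ℝ)+1) ∧ dist w a < ε := by
  obtain ⟨N, hN⟩ := exists_nat_one_div_lt hε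
  refine ⟨N, fun n hn => ?_⟩
  refine ⟨⟨(1/((n:ℝ)+1), (a:ℝ×ℝ).2), line_mem n (snd_mem_Icc ha)⟩, rfl, ?_⟩
  rw [Subtype.dist_eq, Prod.dist_eq]
  have h1 : dist (1/((n:ℝ)+1)) (a:ℝ×ℝ).1 = 1/((n:ℝ)+1) := by
    rw [ha, Real.dist_eq, sub_zero, abs_of_pos (recip_pos n)]
  have h2 : dist ((a:ℝ×ℝ).2) ((a:ℝ×ℝ).2) = 0 := dist_self _
  show dist (1/((n:ℝ)+1)) (a:ℝ×ℝ).1 ⊔ dist ((a:ℝ×ℝ).2) ((a:ℝ×ℝ).2) < ε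
  rw [h1, h2]
  have hle : (1:ℝ)/((n:ℝ)+1) ≤ 1/((N:ℝ)+1) := recip_le_iff.mpr hn
  have : (1:ℝ)/((N:ℝ)+1) < ε := hN
  exact max_lt (by linarith) hε

-- any two x=0 points are in the same quasicomponent
lemma quasi_zero {a b : ↥X18} (ha : (a:ℝ×ℝ).1 = 0) (hb : (b:ℝ×ℝ).1 = 0) :
    ∀ U : Set ↥X18, IsClopen U → (a ∈ U ↔ b ∈ U) := by
  have key : ∀ (a b : ↥X18), (a:ℝ×ℝ).1 = 0 → (b:ℝ×ℝ).1 = 0 →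
      ∀ U : Set ↥X18, IsClopen U → a ∈ U → b ∈ U := by
    intro a b ha hb U hU haU
    by_contra hbU
    obtain ⟨ε₁, hε₁, hball₁⟩ := Metric.isOpen_iff.mp hU.isOpen a haU
    obtain ⟨ε₂, hε₂, hball₂⟩ := Metric.isOpen_iff.mp hU.compl.isOpen b hbU
    obtain ⟨N₁, hN₁⟩ := ball_point a ha hε₁
    obtain ⟨N₂, hN₂⟩ := ball_point b hb hε₂
    set n := max N₁ N₂
    obtain ⟨w₁, hw₁, hd₁⟩ := hN₁ n (le_max_left _ _)
    obtain ⟨w₂, hw₂, hd₂⟩ := hN₂ n (le_max_right _ _)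
    have hw₁U : w₁ ∈ U := hball₁ hd₁
    have hw₂U : w₂ ∈ Uᶜ := hball₂ hd₂
    exact hw₂U ((quasi_line hw₁ hw₂ U hU).mp hw₁U)
  intro U hU
  exact ⟨fun h => key a b ha hb U hU h, fun h => key b a hb ha U hU h⟩

noncomputable section

abbrev qMap : ↥X18 → QuasiComponents ↥X18 := Quotient.mk (quasiComponentSetoid ↥X18)

lemma qMap_quot : Topology.IsQuotientMap qMap := by
  exact isQuotientMap_quotient_mk'

lemma qMap_eq {a b : ↥X18} (h : ∀ U : Set ↥X18, IsClopen U → (a ∈ U ↔ b ∈ U)) :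
    qMap a = qMap b := Quotient.sound h

def pt0 : ↥X18 := ⟨(0, -1/2), Or.inr (Or.inl ⟨rfl, by norm_num, by norm_num⟩)⟩

def linePt (n : ℕ) : ↥X18 := ⟨(1/((n:ℝ)+1), -1/2), line_mem n (by norm_num)⟩

lemma compactQ : CompactSpace (QuasiComponents ↥X18) := by
  constructor
  apply isCompact_of_finite_subcover
  intro ι U hUo hcov
  classical
  have hp0 : qMap pt0 ∈ ⋃ i, U i := hcov (mem_univ _)
  obtain ⟨i₀, hi₀⟩ := mem_iUnion.mp hp0
  have hV₀ : IsOpen (qMap ⁻¹' U i₀) := (qMap_quot.continuous).isOpen_preimage _ (hUo i₀)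
  have hp0' : pt0 ∈ qMap ⁻¹' U i₀ := hi₀
  obtain ⟨ε, hε, hball⟩ := Metric.isOpen_iff.mp hV₀ pt0 hp0'
  obtain ⟨N, hN⟩ := ball_point pt0 rfl hε
  -- choose a cover element for each small line
  have hgp : ∀ n : ℕ, ∃ i, qMap (linePt n) ∈ U i := fun n =>
    mem_iUnion.mp (hcov (mem_univ _))
  choose g hg using hgp
  refine ⟨insert i₀ ((Finset.range N).image g), ?_⟩
  rintro c -
  obtain ⟨x, rfl⟩ := Quotient.exists_rep c
  have hx : qMap x = Quotient.mk _ x := rfl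
  rcases fst_mem x.2 with h0 | ⟨n, hn⟩
  · -- x is an x=0 point: same class as pt0
    have : qMap x = qMap pt0 := qMap_eq (quasi_zero h0 rfl)
    refine mem_iUnion₂.mpr ?_
    exact ⟨i₀, Finset.mem_insert_self _ _, by rw [← hx, this]; exact hi₀⟩
  · rcases lt_or_ge n N with hlt | hge
    · have : qMap x = qMap (linePt n) := qMap_eq (quasi_line hn rfl)
      refine mem_iUnion₂.mpr ?_
      refine ⟨g n, Finset.mem_insert_of_mem (Finset.mem_image_of_mem g (Finset.mem_range.mpr hlt)), ?_⟩
      rw [← hx, this]; exact hg n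
    · obtain ⟨w, hw, hd⟩ := hN n hge
      have hwU : w ∈ qMap ⁻¹' U i₀ := hball hd
      have : qMap x = qMap w := qMap_eq (quasi_line hn hw)
      refine mem_iUnion₂.mpr ?_
      exact ⟨i₀, Finset.mem_insert_self _ _, by rw [← hx, this]; exact hwU⟩
end

lemma recip_succ_le {j k : ℕ} (h : j < k) : (1:ℝ)/((k:ℝ)+1) ≤ 1/((j:ℝ)+2) := by
  have h2 : (1:ℝ)/((k:ℝ)+1) ≤ 1/(((j+1:ℕ):ℝ)+1) := recip_le_iff.mpr h
  push_cast at h2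
  rw [show ((j:ℝ)+1)+1 = (j:ℝ)+2 from by ring] at h2
  exact h2

lemma Ioo_disj {j k : ℕ} (hjk : j ≠ k) {y : ℝ}
    (hj : y ∈ Ioo (1/((j:ℝ)+2)) (1/((j:ℝ)+1)))
    (hk : y ∈ Ioo (1/((k:ℝ)+2)) (1/((k:ℝ)+1))) : False := by
  rcases hjk.lt_or_gt with h | h
  · have := recip_succ_le h
    have := hk.2
    have := hj.1
    linarith
  · have := recip_succ_le h
    have := hj.2
    have := hk.1
    linarith

noncomputable section

abbrev ccMap : ↥X18 → ConnectedComponents ↥X18 := ConnectedComponents.mk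

lemma cc_sat_preimage {A : Set ↥X18} (hsat : ∀ p ∈ A, connectedComponent p ⊆ A) :
    ccMap ⁻¹' (ccMap '' A) = A := by
  ext b
  constructor
  · rintro ⟨a, haA, hab⟩
    have h := ConnectedComponents.coe_eq_coe.mp hab
    have : b ∈ connectedComponent a := by
      rw [h]; exact mem_connectedComponent
    exact hsat a haA this
  · intro hb
    exact ⟨b, hb, rfl⟩

def Wset : Set ↥X18 := {p | (p:ℝ×ℝ).1 ≠ 0 ∨ (p:ℝ×ℝ).2 < 0}

def Aset (k : ℕ) : Set ↥X18 :=
  {p | ((0:ℝ) < (p:ℝ×ℝ).1 ∧ (p:ℝ×ℝ).1 < 1/((k:ℝ)+1)) ∨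
       ((p:ℝ×ℝ).1 < 1/((k:ℝ)+1) ∧ (p:ℝ×ℝ).2 ∈ Ioo (1/((k:ℝ)+2)) (1/((k:ℝ)+1)))}

lemma Wset_open : IsOpen Wset := by
  have : IsOpen {q : ℝ × ℝ | q.1 ≠ 0 ∨ q.2 < 0} := by
    have h1 : IsOpen {q : ℝ × ℝ | q.1 ≠ 0} :=
      isOpen_compl_singleton.preimage continuous_fst
    have h2 : IsOpen {q : ℝ × ℝ | q.2 < 0} := isOpen_lt continuous_snd continuous_const
    exact h1.union h2
  exact this.preimage continuous_subtype_val

lemma Aset_open (k : ℕ) : IsOpen (Aset k) := by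
  have : IsOpen {q : ℝ × ℝ | ((0:ℝ) < q.1 ∧ q.1 < 1/((k:ℝ)+1)) ∨
      (q.1 < 1/((k:ℝ)+1) ∧ q.2 ∈ Ioo (1/((k:ℝ)+2)) (1/((k:ℝ)+1)))} := by
    apply IsOpen.union
    · exact (isOpen_lt continuous_const continuous_fst).inter
        (isOpen_lt continuous_fst continuous_const)
    · exact (isOpen_lt continuous_fst continuous_const).inter
        (((isOpen_Ioo).preimage continuous_snd))
  exact this.preimage continuous_subtype_val

lemma Wset_sat : ∀ p ∈ Wset, connectedComponent p ⊆ Wset := by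
  intro p hp b hb
  rcases fst_mem p.2 with h0 | ⟨n, hn⟩
  · rcases hp with h | h
    · exact absurd h0 h
    · exact Or.inr (comp_neg h0 h b hb).2
  · have := comp_line hn b hb
    exact Or.inl (by rw [this]; exact ne_of_gt (recip_pos n))

lemma Aset_sat (k : ℕ) : ∀ p ∈ Aset k, connectedComponent p ⊆ Aset k := by
  intro p hp b hb
  rcases fst_mem p.2 with h0 | ⟨n, hn⟩
  · rcases hp with ⟨h1, _⟩ | ⟨_, h2⟩
    · rw [h0] at h1; exact absurd h1 (lt_irrefl 0)
    · have := comp_Ik h0 h2 b hb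
      exact Or.inr ⟨by rw [this.1]; exact recip_pos k, this.2⟩
  · have hlt : (p:ℝ×ℝ).1 < 1/((k:ℝ)+1) := by
      rcases hp with ⟨_, h⟩ | ⟨h, _⟩ <;> exact h
    have hb1 := comp_line hn b hb
    exact Or.inl ⟨by rw [hb1]; exact recip_pos n, by rw [hb1, ← hn]; exact hlt⟩

def Vcov : Option ℕ → Set (ConnectedComponents ↥X18)
  | none => ccMap '' Wset
  | some k => ccMap '' (Aset k)

lemma Vcov_open (i : Option ℕ) : IsOpen (Vcov i) := by
  cases i with
  | none =>
    rw [← ConnectedComponents.isQuotientMap_coe.isOpen_preimage]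
    rw [show (ConnectedComponents.mk ⁻¹' (Vcov none)) = Wset from cc_sat_preimage Wset_sat]
    exact Wset_open
  | some k =>
    rw [← ConnectedComponents.isQuotientMap_coe.isOpen_preimage]
    rw [show (ConnectedComponents.mk ⁻¹' (Vcov (some k))) = Aset k from
      cc_sat_preimage (Aset_sat k)]
    exact Aset_open k

lemma Vcov_covers : (univ : Set (ConnectedComponents ↥X18)) ⊆ ⋃ i, Vcov i := by
  rintro c -
  obtain ⟨x, rfl⟩ := ConnectedComponents.surjective_coe c
  rcases fst_mem x.2 with h0 | ⟨n, hn⟩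
  · rcases SP_of_mem x.2 h0 with ⟨_, hneg⟩ | ⟨k, hIoo⟩
    · exact mem_iUnion.mpr ⟨none, ⟨x, Or.inr hneg, rfl⟩⟩
    · refine mem_iUnion.mpr ⟨some k, ⟨x, Or.inr ⟨?_, hIoo⟩, rfl⟩⟩
      rw [h0]; exact recip_pos k
  · exact mem_iUnion.mpr ⟨none, ⟨x, Or.inl (by rw [hn]; exact ne_of_gt (recip_pos n)), rfl⟩⟩

lemma notCompactCC : ¬ CompactSpace (ConnectedComponents ↥X18) := by
  intro h
  obtain ⟨t, ht⟩ := h.isCompact_univ.elim_finite_subcover Vcov Vcov_open Vcov_covers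
  -- pick k with (some k) ∉ t
  set k := (t.sup fun o => o.getD 0) + 1 with hk
  have hkt : some k ∉ t := by
    intro hmem
    have : k ≤ t.sup fun o => o.getD 0 := Finset.le_sup (f := fun o => o.getD 0) hmem
    omega
  -- the midpoint of I_k
  set m : ℝ := (1/((k:ℝ)+2) + 1/((k:ℝ)+1))/2 with hm
  have hmIoo : m ∈ Ioo (1/((k:ℝ)+2)) (1/((k:ℝ)+1)) := by
    have := recip_lt k
    constructor <;> (rw [hm]; linarith)
  set p : ↥X18 := ⟨(0, m), Or.inr (Or.inr ⟨k, rfl, hmIoo⟩)⟩ with hp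
  have hpc : ccMap p ∈ ⋃ i ∈ t, Vcov i := ht (mem_univ _)
  obtain ⟨i, hit, hi⟩ := mem_iUnion₂.mp hpc
  have hp1 : (p:ℝ×ℝ).1 = 0 := rfl
  have hp2 : (p:ℝ×ℝ).2 ∈ Ioo (1/((k:ℝ)+2)) (1/((k:ℝ)+1)) := hmIoo
  cases i with
  | none =>
    obtain ⟨a, haA, hac⟩ := hi
    have ha : a ∈ connectedComponent p := by
      rw [← ConnectedComponents.coe_eq_coe.mp hac]
      exact mem_connectedComponent
    have haprop := comp_Ik hp1 hp2 a ha
    rcases haA with h | h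
    · exact h haprop.1
    · have := haprop.2.1
      have hpos : (0:ℝ) < 1/((k:ℝ)+2) := by positivity
      linarith
  | some j =>
    obtain ⟨a, haA, hac⟩ := hi
    have ha : a ∈ connectedComponent p := by
      rw [← ConnectedComponents.coe_eq_coe.mp hac]
      exact mem_connectedComponent
    have haprop := comp_Ik hp1 hp2 a ha
    have hjk : j ≠ k := fun he => hkt (he ▸ hit)
    rcases haA with ⟨h1, _⟩ | ⟨_, h2⟩
    · rw [haprop.1] at h1; exact lt_irrefl 0 h1
    · exact Ioo_disj hjk h2 haprop.2
end

theorem stmt_18 :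
    CompactSpace (QuasiComponents X18) ∧ ¬ CompactSpace (ConnectedComponents X18) := by
  exact ⟨compactQ, notCompactCC⟩
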